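/- Let F be a field and let c₁, c₂ ∈ F⁴ be linearly independent (the rows of a rank-2 cache matrix C, with C_A its left 2×2 block of first-two coordinates and C_B its right 2×2 block of last-two coordinates). If there exists t ∈ F⁴ such that the cache recovers file A from t (i.e., e₀, e₁ ∈ span{c₁, c₂, t}) and there exists t' ∈ F⁴ such that the cache recovers file B from t' (i.e., e₂, e₃ ∈ span{c₁, c₂, t'}), then rank(C_A) = 1 and rank(C_B) = 1. -/

import Mathlib

/-!
Let `π : F⁴ → F²` forget the `B`-coordinates, so that the rows of `C_A` are `π c₁, π c₂`.
Recovering `A` from `t` means that `π` maps `span {c₁, c₂, t}` onto `F²`; as `π t` adds at most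
one dimension, `π c₁, π c₂` span at least a line. Recovering `B` from `t'` puts
`ker π = span {e₂, e₃}` inside `W = span {c₁, c₂, t'}`; if `π c₁, π c₂` spanned `F²`, then
`π W = F²` together with `ker π ≤ W` would force `W = F⁴`, impossible for three vectors.
Exchanging the roles of `A` and `B` gives the claim for `C_B`.
-/

/-- Coordinates of `F⁴` correspond to the subfiles `A₀, A₁, B₀, B₁`.  A user with
cache rows `c1, c2` recovers file `A` from transmission `t` iff `e₀` and `e₁`
lie in the span of `{c1, c2, t}`. -/
def recoversA {F : Type*} [Field F] (c1 c2 t : Fin 4 → F) : Prop :=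
  (Pi.single 0 1 : Fin 4 → F) ∈ Submodule.span F {c1, c2, t} ∧
  (Pi.single 1 1 : Fin 4 → F) ∈ Submodule.span F {c1, c2, t}

/-- A user with cache rows `c1, c2` recovers file `B` from transmission `t` iff
`e₂` and `e₃` lie in the span of `{c1, c2, t}`. -/
def recoversB {F : Type*} [Field F] (c1 c2 t : Fin 4 → F) : Prop :=
  (Pi.single 2 1 : Fin 4 → F) ∈ Submodule.span F {c1, c2, t} ∧
  (Pi.single 3 1 : Fin 4 → F) ∈ Submodule.span F {c1, c2, t}

open Module Submodule

theorem map_ne_top_of_ker_le {R M M' : Type*} [Ring R] [AddCommGroup M] [Module R M]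
    [AddCommGroup M'] [Module R M'] {f : M →ₗ[R] M'} {W : Submodule R M}
    (hker : LinearMap.ker f ≤ W) (hW : W ≠ ⊤) : W.map f ≠ ⊤ := by
  intro h
  apply hW
  rw [← sup_eq_left.mpr hker, ← comap_map_eq, h, comap_top]

section
variable {K V V' : Type*} [DivisionRing K] [AddCommGroup V] [Module K V]
  [AddCommGroup V'] [Module K V']

theorem finrank_span_insert_le [FiniteDimensional K V] (x : V) (s : Set V) :
    finrank K (span K (insert x s)) ≤ finrank K (span K s) + 1 := by
  rw [span_insert, sup_comm]
  refine (finrank_add_le_finrank_add_finrank _ _).trans (Nat.add_le_add_left ?_ _)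
  simpa using finrank_span_le_card (R := K) ({x} : Set V)

theorem span_triple_ne_top [FiniteDimensional K V] (h : 3 < finrank K V) (a b c : V) :
    span K {a, b, c} ≠ ⊤ := by
  classical
  intro htop
  have hle := finrank_span_le_card (R := K) ({a, b, c} : Set V)
  have hcard : ({a, b, c} : Set V).toFinset.card ≤ 3 := by simpa using Finset.card_le_three
  rw [htop, finrank_top] at hle
  omega

theorem finrank_span_image_add_one [FiniteDimensional K V'] {f : V →ₗ[K] V'} {s : Set V}
    {t t' : V} (hA : (span K (insert t s)).map f = ⊤)
    (hB : LinearMap.ker f ≤ span K (insert t' s)) (hne : span K (insert t' s) ≠ ⊤) :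
    finrank K (span K (f '' s)) + 1 = finrank K V' := by
  apply le_antisymm
  · have hs : span K (f '' s) ≠ ⊤ := by
      rw [← map_span]
      exact ne_top_of_le_ne_top (map_ne_top_of_ker_le hB hne)
        (map_mono (span_mono (Set.subset_insert _ _)))
    exact finrank_lt hs
  · calc finrank K V' = finrank K (span K (insert (f t) (f '' s))) := by
          rw [← Set.image_insert_eq, ← map_span, hA, finrank_top]
      _ ≤ finrank K (span K (f '' s)) + 1 := finrank_span_insert_le _ _

end

section
variable {R : Type*} [Semiring R] {m n : Type*} [DecidableEq n] {p : m → n}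
  {W : Submodule R (n → R)}

theorem map_funLeft_eq_top [Finite m] [DecidableEq m] (hp : Function.Injective p)
    (h : ∀ j, Pi.single (p j) 1 ∈ W) : W.map (LinearMap.funLeft R R p) = ⊤ := by
  have hsingle (j : m) : LinearMap.funLeft R R p (Pi.single (p j) 1) = Pi.single j 1 := by
    ext i
    simp [LinearMap.funLeft_apply, Pi.single_apply, hp.eq_iff]
  rw [eq_top_iff, ← (Pi.basisFun R m).span_eq, span_le]
  rintro _ ⟨j, rfl⟩
  exact ⟨_, h j, by simpa using hsingle j⟩

theorem ker_funLeft_le [Fintype n] (h : ∀ i ∉ Set.range p, Pi.single i 1 ∈ W) :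
    LinearMap.ker (LinearMap.funLeft R R p) ≤ W := by
  intro v hv
  rw [pi_eq_sum_univ' v]
  refine sum_mem fun i _ => ?_
  by_cases hi : i ∈ Set.range p
  · obtain ⟨j, rfl⟩ := hi
    simp [show v (p j) = 0 from congrFun hv j]
  · exact W.smul_mem _ (h i hi)

end

theorem Matrix.rank_of_pair {K n : Type*} [Field K] [Fintype n] (u v : n → K) :
    (Matrix.of ![u, v]).rank = finrank K (span K {u, v}) := by
  rw [Matrix.rank_eq_finrank_span_row]
  change finrank K (span K (Set.range ![u, v])) = _
  rw [Matrix.range_cons_cons_empty]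

theorem rank_block_eq_one {F : Type*} [Field F] {p q : Fin 2 → Fin 4}
    (hp : Function.Injective p) (hpq : ∀ i, i ∈ Set.range p ∨ i ∈ Set.range q)
    {c1 c2 t t' : Fin 4 → F} (hA : ∀ j, Pi.single (p j) 1 ∈ span F {c1, c2, t})
    (hB : ∀ j, Pi.single (q j) 1 ∈ span F {c1, c2, t'}) :
    (Matrix.of ![c1 ∘ p, c2 ∘ p]).rank = 1 := by
  have htriple (u : Fin 4 → F) : ({c1, c2, u} : Set (Fin 4 → F)) = insert u {c1, c2} := by
    rw [Set.pair_comm c2, Set.insert_comm]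
  have hB' : ∀ i ∉ Set.range p, Pi.single i 1 ∈ span F {c1, c2, t'} := by
    intro i hi
    obtain ⟨j, rfl⟩ := (hpq i).resolve_left hi
    exact hB j
  have hne := span_triple_ne_top (K := F) (by simp) c1 c2 t'
  simp only [htriple] at hA hB' hne
  have key : finrank F (span F {c1 ∘ p, c2 ∘ p}) + 1 = finrank F (Fin 2 → F) := by
    change finrank F (span F {LinearMap.funLeft F F p c1, LinearMap.funLeft F F p c2}) + 1 = _
    rw [← Set.image_pair]
    exact finrank_span_image_add_one (map_funLeft_eq_top hp hA) (ker_funLeft_le hB') hne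
  rw [Matrix.rank_of_pair]
  rw [finrank_fin_fun] at key
  omega

theorem cache_blocks_rank_one_general (F : Type*) [Field F] (c1 c2 : Fin 4 → F)
    (hA : ∃ t : Fin 4 → F, recoversA c1 c2 t)
    (hB : ∃ t' : Fin 4 → F, recoversB c1 c2 t') :
    (!![c1 0, c1 1; c2 0, c2 1] : Matrix (Fin 2) (Fin 2) F).rank = 1 ∧
    (!![c1 2, c1 3; c2 2, c2 3] : Matrix (Fin 2) (Fin 2) F).rank = 1 := by
  obtain ⟨t, hA0, hA1⟩ := hA
  obtain ⟨t', hB2, hB3⟩ := hB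
  have hcover (i : Fin 4) : i ∈ Set.range ![0, 1] ∨ i ∈ Set.range ![2, 3] := by
    fin_cases i <;> simp
  have hCA : !![c1 0, c1 1; c2 0, c2 1] = Matrix.of ![c1 ∘ ![0, 1], c2 ∘ ![0, 1]] := by
    ext i j; fin_cases i <;> fin_cases j <;> rfl
  have hCB : !![c1 2, c1 3; c2 2, c2 3] = Matrix.of ![c1 ∘ ![2, 3], c2 ∘ ![2, 3]] := by
    ext i j; fin_cases i <;> fin_cases j <;> rfl
  have hrecA : ∀ j, Pi.single (![0, 1] j) 1 ∈ span F {c1, c2, t} :=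
    Fin.forall_fin_two.2 ⟨hA0, hA1⟩
  have hrecB : ∀ j, Pi.single (![2, 3] j) 1 ∈ span F {c1, c2, t'} :=
    Fin.forall_fin_two.2 ⟨hB2, hB3⟩
  rw [hCA, hCB]
  exact ⟨rank_block_eq_one (by decide) hcover hrecA hrecB,
    rank_block_eq_one (by decide) (fun i => (hcover i).symm) hrecB hrecA⟩

/-- Rank constraints on the coefficient matrix of a cache: if the linearly
independent cache rows `c1, c2 ∈ F⁴` can recover file `A` from some transmission
and file `B` from some (possibly different) transmission, then the left 2×2 block
`C_A` (first two coordinates) and the right 2×2 block `C_B` (last two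
coordinates) of the cache matrix both have rank 1. -/
theorem cache_blocks_rank_one (F : Type*) [Field F] (c1 c2 : Fin 4 → F)
    (hind : LinearIndependent F ![c1, c2])
    (hA : ∃ t : Fin 4 → F, recoversA c1 c2 t)
    (hB : ∃ t' : Fin 4 → F, recoversB c1 c2 t') :
    (!![c1 0, c1 1; c2 0, c2 1] : Matrix (Fin 2) (Fin 2) F).rank = 1 ∧
    (!![c1 2, c1 3; c2 2, c2 3] : Matrix (Fin 2) (Fin 2) F).rank = 1 :=
  cache_blocks_rank_one_general F c1 c2 hA hB
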